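/- Fix σ₁ > 0 and σ₂ > 0, and define κ : (−1,1) → ℝ by κ(θ) = (σ₁·σ₂/π)·( θ·arcsin(θ) + √(1−θ²) + 1 − θ·arcsin(θ/2) − √(4−θ²) ). Then for every θ ∈ (−1,1), κ is differentiable at θ with κ′(θ) = (σ₁·σ₂/π)·( arcsin(θ) − arcsin(θ/2) ), and κ is convex on the open interval (−1,1). -/

import Mathlib

/-- Bergsma's covariance for the bivariate normal distribution with standard
deviations `σ₁`, `σ₂` and correlation `θ`, closed form. -/
noncomputable def kappaBVN (σ₁ σ₂ θ : ℝ) : ℝ :=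
  (σ₁ * σ₂ / Real.pi) *
    (θ * Real.arcsin θ + Real.sqrt (1 - θ ^ 2) + 1 -
      θ * Real.arcsin (θ / 2) - Real.sqrt (4 - θ ^ 2))

lemma hasDerivAt_F (θ : ℝ) (hθ : θ ∈ Set.Ioo (-1 : ℝ) 1) :
    HasDerivAt (fun x : ℝ => x * Real.arcsin x + Real.sqrt (1 - x ^ 2) + 1 -
      x * Real.arcsin (x / 2) - Real.sqrt (4 - x ^ 2))
      (Real.arcsin θ - Real.arcsin (θ / 2)) θ := by
  obtain ⟨h1, h2⟩ := hθ
  have h1' : θ ≠ -1 := by intro h; rw [h] at h1; linarith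
  have h2' : θ ≠ 1 := by intro h; rw [h] at h2; linarith
  have hu : (0 : ℝ) < 1 - θ ^ 2 := by nlinarith
  have hv : (0 : ℝ) < 4 - θ ^ 2 := by nlinarith
  have hw : (0 : ℝ) < 1 - (θ / 2) ^ 2 := by nlinarith
  have hsu : 0 < Real.sqrt (1 - θ ^ 2) := Real.sqrt_pos.2 hu
  have hsv : 0 < Real.sqrt (4 - θ ^ 2) := Real.sqrt_pos.2 hv
  have hsw : 0 < Real.sqrt (1 - (θ / 2) ^ 2) := Real.sqrt_pos.2 hw
  have hvw : Real.sqrt (4 - θ ^ 2) = 2 * Real.sqrt (1 - (θ / 2) ^ 2) := by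
    rw [show (4 - θ ^ 2 : ℝ) = 2 ^ 2 * (1 - (θ / 2) ^ 2) by ring,
      Real.sqrt_mul (by positivity), Real.sqrt_sq (by norm_num)]
  have hA : HasDerivAt (fun x : ℝ => x * Real.arcsin x)
      (1 * Real.arcsin θ + θ * (1 / Real.sqrt (1 - θ ^ 2))) θ :=
    (hasDerivAt_id θ).mul (Real.hasDerivAt_arcsin h1' h2')
  have hpoly1 : HasDerivAt (fun x : ℝ => 1 - x ^ 2) (-(2 * θ)) θ := by
    simpa using (hasDerivAt_pow 2 θ).const_sub 1
  have hB : HasDerivAt (fun x : ℝ => Real.sqrt (1 - x ^ 2))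
      (1 / (2 * Real.sqrt (1 - θ ^ 2)) * -(2 * θ)) θ :=
    (Real.hasDerivAt_sqrt hu.ne').comp θ hpoly1
  have hhalf : HasDerivAt (fun x : ℝ => x / 2) (1 / 2) θ := by
    simpa using (hasDerivAt_id θ).div_const 2
  have hh1 : θ / 2 ≠ -1 := by intro h; nlinarith [h]
  have hh2 : θ / 2 ≠ 1 := by intro h; nlinarith [h]
  have hC0 : HasDerivAt (fun x : ℝ => Real.arcsin (x / 2))
      (1 / Real.sqrt (1 - (θ / 2) ^ 2) * (1 / 2)) θ :=
    (Real.hasDerivAt_arcsin hh1 hh2).comp (h₂ := Real.arcsin) θ hhalf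
  have hC : HasDerivAt (fun x : ℝ => x * Real.arcsin (x / 2))
      (1 * Real.arcsin (θ / 2) + θ * (1 / Real.sqrt (1 - (θ / 2) ^ 2) * (1 / 2))) θ :=
    (hasDerivAt_id θ).mul hC0
  have hpoly2 : HasDerivAt (fun x : ℝ => 4 - x ^ 2) (-(2 * θ)) θ := by
    simpa using (hasDerivAt_pow 2 θ).const_sub 4
  have hD : HasDerivAt (fun x : ℝ => Real.sqrt (4 - x ^ 2))
      (1 / (2 * Real.sqrt (4 - θ ^ 2)) * -(2 * θ)) θ :=
    (Real.hasDerivAt_sqrt hv.ne').comp θ hpoly2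
  have htot := (((hA.add hB).add_const 1).sub hC).sub hD
  convert htot using 1
  · rfl
  · rfl
  · rfl
  rw [hvw]
  field_simp
  ring

lemma hasDerivAt_kappa (σ₁ σ₂ θ : ℝ) (hθ : θ ∈ Set.Ioo (-1 : ℝ) 1) :
    HasDerivAt (kappaBVN σ₁ σ₂)
      ((σ₁ * σ₂ / Real.pi) * (Real.arcsin θ - Real.arcsin (θ / 2))) θ := by
  exact (hasDerivAt_F θ hθ).const_mul (σ₁ * σ₂ / Real.pi)

lemma strictMono_g : StrictMonoOn (fun θ : ℝ => Real.arcsin θ - Real.arcsin (θ / 2))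
    (Set.Ioo (-1 : ℝ) 1) := by
  apply strictMonoOn_of_deriv_pos (convex_Ioo _ _)
  · exact (Real.continuous_arcsin.sub (Real.continuous_arcsin.comp
      (continuous_id.div_const 2))).continuousOn
  · intro x hx
    rw [interior_Ioo] at hx
    obtain ⟨h1, h2⟩ := hx
    have h1' : x ≠ -1 := by intro h; rw [h] at h1; linarith
    have h2' : x ≠ 1 := by intro h; rw [h] at h2; linarith
    have hh1 : x / 2 ≠ -1 := by intro h; nlinarith [h]
    have hh2 : x / 2 ≠ 1 := by intro h; nlinarith [h]
    have hhalf : HasDerivAt (fun y : ℝ => y / 2) (1 / 2) x := by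
      simpa using (hasDerivAt_id x).div_const 2
    have hd : HasDerivAt (fun θ : ℝ => Real.arcsin θ - Real.arcsin (θ / 2))
        (1 / Real.sqrt (1 - x ^ 2) - 1 / Real.sqrt (1 - (x / 2) ^ 2) * (1 / 2)) x :=
      (Real.hasDerivAt_arcsin h1' h2').sub
        ((Real.hasDerivAt_arcsin hh1 hh2).comp (h₂ := Real.arcsin) x hhalf)
    rw [hd.deriv]
    have hu : (0 : ℝ) < 1 - x ^ 2 := by nlinarith
    have hw : (0 : ℝ) < 1 - (x / 2) ^ 2 := by nlinarith
    have hsu : 0 < Real.sqrt (1 - x ^ 2) := Real.sqrt_pos.2 hu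
    have hsw : 0 < Real.sqrt (1 - (x / 2) ^ 2) := Real.sqrt_pos.2 hw
    have hle : Real.sqrt (1 - x ^ 2) < 2 * Real.sqrt (1 - (x / 2) ^ 2) := by
      rw [show (2 : ℝ) * Real.sqrt (1 - (x / 2) ^ 2)
          = Real.sqrt (2 ^ 2 * (1 - (x / 2) ^ 2)) by
        rw [Real.sqrt_mul (by positivity), Real.sqrt_sq (by norm_num)]]
      apply Real.sqrt_lt_sqrt hu.le
      nlinarith
    rw [sub_pos, show 1 / Real.sqrt (1 - (x / 2) ^ 2) * (1 / 2)
        = 1 / (2 * Real.sqrt (1 - (x / 2) ^ 2)) by ring,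
      div_lt_div_iff₀ (by positivity) hsu]
    nlinarith

theorem stmt18 (σ₁ σ₂ : ℝ) (hσ₁ : 0 < σ₁) (hσ₂ : 0 < σ₂) :
    (∀ θ ∈ Set.Ioo (-1 : ℝ) 1,
        HasDerivAt (kappaBVN σ₁ σ₂)
          ((σ₁ * σ₂ / Real.pi) * (Real.arcsin θ - Real.arcsin (θ / 2))) θ) ∧
      ConvexOn ℝ (Set.Ioo (-1 : ℝ) 1) (kappaBVN σ₁ σ₂) := by
  have hc : (0 : ℝ) ≤ σ₁ * σ₂ / Real.pi := by positivity
  refine ⟨fun θ hθ => hasDerivAt_kappa σ₁ σ₂ θ hθ, ?_⟩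
  have hdiff : ∀ x ∈ Set.Ioo (-1 : ℝ) 1, DifferentiableAt ℝ (kappaBVN σ₁ σ₂) x :=
    fun x hx => (hasDerivAt_kappa σ₁ σ₂ x hx).differentiableAt
  apply MonotoneOn.convexOn_of_deriv (convex_Ioo _ _)
  · intro x hx
    exact (hdiff x hx).continuousAt.continuousWithinAt
  · rw [interior_Ioo]
    exact fun x hx => (hdiff x hx).differentiableWithinAt
  · rw [interior_Ioo]
    intro x hx y hy hxy
    rw [(hasDerivAt_kappa σ₁ σ₂ x hx).deriv, (hasDerivAt_kappa σ₁ σ₂ y hy).deriv]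
    rcases eq_or_lt_of_le hxy with rfl | h
    · exact le_rfl
    · exact mul_le_mul_of_nonneg_left (strictMono_g hx hy h).le hc
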